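/- arXiv:2404.02272 — 3 statements merged into one kernel-verified Lean document; each statement's English description precedes it below -/
import Mathlib

section
/- Euclid Book 1, Proposition 16 (exterior angle theorem): in a nondegenerate triangle ABC in the plane, if D is a point such that B lies strictly between C and D, then the exterior angle ∠ABD is greater than each of the interior angles ∠BAC and ∠BCA. -/
open EuclideanGeometry

namespace EuclideanGeometry

variable {V P : Type*} [NormedAddCommGroup V] [InnerProductSpace ℝ V] [MetricSpace P]
  [NormedAddTorsor V P]

theorem angle_lt_exterior_angle_of_sbtw {A B C D : P} (h : ¬Collinear ℝ ({A, B, C} : Set P))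
    (hD : Sbtw ℝ C B D) : ∠ B A C < ∠ A B D ∧ ∠ B C A < ∠ A B D := by
  have hext : ∠ A B D = ∠ B A C + ∠ A C B := exterior_angle_eq_angle_add_angle D hD.symm
  have hBAC : 0 < ∠ B A C := angle_pos_of_not_collinear (by rwa [Set.insert_comm])
  have hACB : 0 < ∠ A C B := angle_pos_of_not_collinear (by rwa [Set.pair_comm])
  rw [angle_comm B C A]
  constructor <;> linarith

end EuclideanGeometry

theorem stmt_9 (A B C D : EuclideanSpace ℝ (Fin 2))
    (h : ¬ Collinear ℝ ({A, B, C} : Set (EuclideanSpace ℝ (Fin 2))))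
    (hD : Sbtw ℝ C B D) :
    ∠ A B D > ∠ B A C ∧ ∠ A B D > ∠ B C A :=
  angle_lt_exterior_angle_of_sbtw h hD
end

section
/- For two triangles ABC and DEF with dist A B = dist D E and dist A C = dist D F, if dist B C > dist E F then ∠BAC > ∠EDF. -/
open EuclideanGeometry

theorem stmt_15 (A B C D E F : EuclideanSpace ℝ (Fin 2))
    (h1 : ¬ Collinear ℝ ({A, B, C} : Set (EuclideanSpace ℝ (Fin 2))))
    (h2 : ¬ Collinear ℝ ({D, E, F} : Set (EuclideanSpace ℝ (Fin 2))))
    (hAB : dist A B = dist D E) (hAC : dist A C = dist D F)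
    (hBC : dist B C > dist E F) :
    ∠ B A C > ∠ E D F := by
  have hAB' : A ≠ B := by rintro rfl; exact h1 (by simp [Set.insert_comm, collinear_pair])
  have hAC' : A ≠ C := by
    rintro rfl
    exact h1 (by rw [Set.insert_comm, Set.pair_comm]; simp [collinear_pair])
  have hab : (0:ℝ) < dist A B := dist_pos.2 hAB'
  have hac : (0:ℝ) < dist A C := dist_pos.2 hAC'
  have l1 := EuclideanGeometry.law_cos B A C
  have l2 := EuclideanGeometry.law_cos E D F
  rw [dist_comm B A, dist_comm C A] at l1
  rw [dist_comm E D, dist_comm F D] at l2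
  have hsq : dist E F ^ 2 < dist B C ^ 2 := by
    apply sq_lt_sq' _ hBC
    linarith [dist_nonneg (x := E) (y := F), dist_nonneg (x := B) (y := C)]
  rw [pow_two, pow_two, l1, l2, ← hAB, ← hAC] at hsq
  have hcos : Real.cos (∠ B A C) < Real.cos (∠ E D F) := by
    have h2ab : 0 < 2 * dist A B * dist A C := by positivity
    nlinarith
  have h1' : ∠ B A C ∈ Set.Icc 0 Real.pi := ⟨angle_nonneg _ _ _, angle_le_pi _ _ _⟩
  have h2' : ∠ E D F ∈ Set.Icc 0 Real.pi := ⟨angle_nonneg _ _ _, angle_le_pi _ _ _⟩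
  by_contra h
  push_neg at h
  rcases eq_or_lt_of_le h with heq | hlt
  · rw [heq] at hcos; exact lt_irrefl _ hcos
  · exact absurd (Real.strictAntiOn_cos h1' h2' hlt) (not_lt.2 hcos.le)
end

section
/- Euclid Book 1, Proposition 18: in a triangle, the greater side subtends the greater angle: if A, B, C are non-collinear and dist A C > dist A B, then ∠ A B C > ∠ A C B. -/
open EuclideanGeometry

theorem stmt_16 (A B C : EuclideanSpace ℝ (Fin 2))
    (h : ¬ Collinear ℝ ({A, B, C} : Set (EuclideanSpace ℝ (Fin 2))))
    (hgt : dist A C > dist A B) :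
    ∠ A B C > ∠ A C B := by
  have hAB : A ≠ B := fun e => h (e ▸ by simp [Set.insert_comm, collinear_pair])
  have hAC : A ≠ C := fun e => h (e ▸ by simp [Set.insert_comm, collinear_pair])
  have hBC : B ≠ C := fun e => h (e ▸ by simp [collinear_pair])
  have hc : dist A B > 0 := dist_pos.2 hAB
  have hb : dist A C > 0 := dist_pos.2 hAC
  have ha : dist B C > 0 := dist_pos.2 hBC
  -- strict triangle inequality
  have htri : dist B C < dist B A + dist A C := by
    rcases lt_or_eq_of_le (dist_triangle B A C) with h' | h'
    · exact h'
    · exfalso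
      have hw : Wbtw ℝ B A C := dist_add_dist_eq_iff.mp h'.symm
      have := hw.collinear
      apply h
      have : ({B, A, C} : Set (EuclideanSpace ℝ (Fin 2))) = {A, B, C} := by
        rw [Set.insert_comm]
      have hcol := hw.collinear
      rwa [this] at hcol
  -- law of cosines at B and C
  have lawB := EuclideanGeometry.law_cos A B C
  have lawC := EuclideanGeometry.law_cos A C B
  set a := dist B C with ha'
  set b := dist A C with hb'
  set c := dist A B with hc'
  have hCB : dist C B = a := dist_comm C B
  rw [hCB] at lawB
  -- cos expressions
  have hcosB : Real.cos (∠ A B C) = (c ^ 2 + a ^ 2 - b ^ 2) / (2 * c * a) := by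
    field_simp
    nlinarith [lawB]
  have hcosC : Real.cos (∠ A C B) = (b ^ 2 + a ^ 2 - c ^ 2) / (2 * b * a) := by
    field_simp
    nlinarith [lawC]
  have htri' : a < c + b := by
    have : dist B A = c := dist_comm B A
    linarith [htri, this]
  have hcoslt : Real.cos (∠ A B C) < Real.cos (∠ A C B) := by
    rw [hcosB, hcosC, div_lt_div_iff₀ (by positivity) (by positivity)]
    nlinarith [mul_pos ha (mul_pos (sub_pos.2 hgt) (mul_pos (sub_pos.2 htri') (by linarith : (0:ℝ) < c + b + a)))]
  by_contra hle
  push_neg at hle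
  have hB1 : ∠ A B C ∈ Set.Icc 0 Real.pi := ⟨angle_nonneg _ _ _, angle_le_pi _ _ _⟩
  have hC1 : ∠ A C B ∈ Set.Icc 0 Real.pi := ⟨angle_nonneg _ _ _, angle_le_pi _ _ _⟩
  have := Real.strictAntiOn_cos.antitoneOn hB1 hC1 hle
  linarith
end
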